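/- arXiv:1806.04131 — 4 statements merged into one kernel-verified Lean document; each statement's English description precedes it below -/
import Mathlib

section
/- If a smooth map u : R^2 → S^2 satisfies u_x = u × u_y, then u is harmonic: Δu + |∇u|^2 u = 0, where |∇u|^2 = |u_x|^2 + |u_y|^2. -/
open Matrix

infixl:74 " ×₃ " => crossProduct

/-- Partial derivative with respect to the first (x) variable. -/
noncomputable def pdx {E : Type*} [NormedAddCommGroup E] [NormedSpace ℝ E]
    (u : ℝ × ℝ → E) (p : ℝ × ℝ) : E := deriv (fun t => u (t, p.2)) p.1

/-- Partial derivative with respect to the second (y) variable. -/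
noncomputable def pdy {E : Type*} [NormedAddCommGroup E] [NormedSpace ℝ E]
    (u : ℝ × ℝ → E) (p : ℝ × ℝ) : E := deriv (fun t => u (p.1, t)) p.2

/-- Leibniz rule for the cross product along a curve. -/
lemma hasDerivAt_cross {f g : ℝ → Fin 3 → ℝ} {f' g' : Fin 3 → ℝ} {t : ℝ}
    (hf : HasDerivAt f f' t) (hg : HasDerivAt g g' t) :
    HasDerivAt (fun s => f s ×₃ g s) (f' ×₃ g t + f t ×₃ g') t := by
  rw [hasDerivAt_pi] at hf hg ⊢
  intro i
  simp only [cross_apply]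
  fin_cases i
  · exact (((hf 1).mul (hg 2)).sub ((hf 2).mul (hg 1))).congr_deriv (by simp; ring)
  · exact (((hf 2).mul (hg 0)).sub ((hf 0).mul (hg 2))).congr_deriv (by simp; ring)
  · exact (((hf 0).mul (hg 1)).sub ((hf 1).mul (hg 0))).congr_deriv (by simp; ring)

/-- Leibniz rule for the dot product along a curve. -/
lemma hasDerivAt_dot {f g : ℝ → Fin 3 → ℝ} {f' g' : Fin 3 → ℝ} {t : ℝ}
    (hf : HasDerivAt f f' t) (hg : HasDerivAt g g' t) :
    HasDerivAt (fun s => f s ⬝ᵥ g s) (f' ⬝ᵥ g t + f t ⬝ᵥ g') t := by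
  rw [hasDerivAt_pi] at hf hg
  simp only [dotProduct, Fin.sum_univ_three]
  exact (((hf 0).mul (hg 0)).add ((hf 1).mul (hg 1))).add (((hf 2).mul (hg 2)))
    |>.congr_deriv (by ring)

lemma triple1 (a c : Fin 3 → ℝ) :
    a ×₃ (a ×₃ c) = (a ⬝ᵥ c) • a - (a ⬝ᵥ a) • c := by
  funext i; fin_cases i <;>
    simp [cross_apply, dotProduct, Fin.sum_univ_three] <;> ring

lemma triple2 (a b : Fin 3 → ℝ) :
    (a ×₃ b) ×₃ b = (a ⬝ᵥ b) • b - (b ⬝ᵥ b) • a := by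
  funext i; fin_cases i <;>
    simp [cross_apply, dotProduct, Fin.sum_univ_three] <;> ring

lemma triple3 (a b : Fin 3 → ℝ) :
    a ×₃ (b ×₃ a) = (a ⬝ᵥ a) • b - (a ⬝ᵥ b) • a := by
  funext i; fin_cases i <;>
    simp [cross_apply, dotProduct, Fin.sum_univ_three] <;> ring

section Calc

variable {f g u : ℝ × ℝ → Fin 3 → ℝ}

lemma lineX_hasDerivAt (p : ℝ × ℝ) :
    HasDerivAt (fun t : ℝ => ((t, p.2) : ℝ × ℝ)) ((1 : ℝ), (0 : ℝ)) p.1 :=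
  (hasDerivAt_id p.1).prodMk (hasDerivAt_const _ _)

lemma lineY_hasDerivAt (p : ℝ × ℝ) :
    HasDerivAt (fun t : ℝ => ((p.1, t) : ℝ × ℝ)) ((0 : ℝ), (1 : ℝ)) p.2 :=
  (hasDerivAt_const _ _).prodMk (hasDerivAt_id p.2)

lemma lineX_contDiff (hf : ContDiff ℝ (⊤ : ℕ∞) f) (y : ℝ) :
    ContDiff ℝ (⊤ : ℕ∞) (fun t : ℝ => f (t, y)) :=
  hf.comp (contDiff_id.prodMk contDiff_const)

lemma lineY_contDiff (hf : ContDiff ℝ (⊤ : ℕ∞) f) (x : ℝ) :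
    ContDiff ℝ (⊤ : ℕ∞) (fun t : ℝ => f (x, t)) :=
  hf.comp (contDiff_const.prodMk contDiff_id)

lemma pdx_hasDerivAt (hf : ContDiff ℝ (⊤ : ℕ∞) f) (p : ℝ × ℝ) :
    HasDerivAt (fun t => f (t, p.2)) (pdx f p) p.1 :=
  ((lineX_contDiff hf p.2).differentiable (by simp) p.1).hasDerivAt

lemma pdy_hasDerivAt (hf : ContDiff ℝ (⊤ : ℕ∞) f) (p : ℝ × ℝ) :
    HasDerivAt (fun t => f (p.1, t)) (pdy f p) p.2 :=
  ((lineY_contDiff hf p.1).differentiable (by simp) p.2).hasDerivAt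

lemma pdx_eq_fderiv (hf : ContDiff ℝ (⊤ : ℕ∞) f) (p : ℝ × ℝ) :
    pdx f p = fderiv ℝ f p ((1 : ℝ), (0 : ℝ)) := by
  have h := ((hf.differentiable (by simp)) (p.1, p.2)).hasFDerivAt.comp_hasDerivAt p.1
    (lineX_hasDerivAt p)
  simpa [pdx, Function.comp_def] using h.deriv

lemma pdy_eq_fderiv (hf : ContDiff ℝ (⊤ : ℕ∞) f) (p : ℝ × ℝ) :
    pdy f p = fderiv ℝ f p ((0 : ℝ), (1 : ℝ)) := by
  have h := ((hf.differentiable (by simp)) (p.1, p.2)).hasFDerivAt.comp_hasDerivAt p.2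
    (lineY_hasDerivAt p)
  simpa [pdy, Function.comp_def] using h.deriv

lemma pdx_contDiff (hf : ContDiff ℝ (⊤ : ℕ∞) f) : ContDiff ℝ (⊤ : ℕ∞) (pdx f) := by
  have : pdx f = fun p => fderiv ℝ f p ((1 : ℝ), (0 : ℝ)) :=
    funext fun p => pdx_eq_fderiv hf p
  rw [this]
  exact (hf.fderiv_right (by simp)).clm_apply contDiff_const

lemma pdy_contDiff (hf : ContDiff ℝ (⊤ : ℕ∞) f) : ContDiff ℝ (⊤ : ℕ∞) (pdy f) := by
  have : pdy f = fun p => fderiv ℝ f p ((0 : ℝ), (1 : ℝ)) :=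
    funext fun p => pdy_eq_fderiv hf p
  rw [this]
  exact (hf.fderiv_right (by simp)).clm_apply contDiff_const

/-- Clairaut: mixed partial derivatives of a smooth function commute. -/
lemma pd_comm (hf : ContDiff ℝ (⊤ : ℕ∞) f) (p : ℝ × ℝ) :
    pdx (pdy f) p = pdy (pdx f) p := by
  have hsymm : IsSymmSndFDerivAt ℝ f p := hf.contDiffAt.isSymmSndFDerivAt (by
    rw [minSmoothness_of_isRCLikeNormedField]; exact WithTop.coe_le_coe.mpr le_top)
  have hx : pdx f = fun q => fderiv ℝ f q ((1 : ℝ), (0 : ℝ)) :=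
    funext fun q => pdx_eq_fderiv hf q
  have hy : pdy f = fun q => fderiv ℝ f q ((0 : ℝ), (1 : ℝ)) :=
    funext fun q => pdy_eq_fderiv hf q
  have hdf : ContDiff ℝ (⊤ : ℕ∞) (fderiv ℝ f) := hf.fderiv_right (by simp)
  have key : ∀ v w : ℝ × ℝ,
      fderiv ℝ (fun q => fderiv ℝ f q v) p w = fderiv ℝ (fderiv ℝ f) p w v := by
    intro v w
    have h1 : HasFDerivAt (fun q => fderiv ℝ f q v)
        ((ContinuousLinearMap.apply ℝ (Fin 3 → ℝ) v).comp (fderiv ℝ (fderiv ℝ f) p)) p :=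
      (ContinuousLinearMap.apply ℝ (Fin 3 → ℝ) v).hasFDerivAt.comp p
        ((hdf.differentiable (by simp)) p).hasFDerivAt
    rw [h1.fderiv]; rfl
  rw [pdx_eq_fderiv (by rw [hy]; exact hdf.clm_apply contDiff_const) p,
      pdy_eq_fderiv (by rw [hx]; exact hdf.clm_apply contDiff_const) p]
  rw [hy, hx, key, key]
  exact hsymm _ _

lemma orthX (hu : ContDiff ℝ (⊤ : ℕ∞) u) (hs : ∀ p, u p ⬝ᵥ u p = 1) (p : ℝ × ℝ) :
    u p ⬝ᵥ pdx u p = 0 := by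
  have h := hasDerivAt_dot (pdx_hasDerivAt hu p) (pdx_hasDerivAt hu p)
  have heq : (fun t => u (t, p.2) ⬝ᵥ u (t, p.2)) = fun _ : ℝ => (1 : ℝ) :=
    funext fun t => hs (t, p.2)
  rw [heq] at h
  have h0 : pdx u p ⬝ᵥ u p + u p ⬝ᵥ pdx u p = 0 := h.unique (hasDerivAt_const _ _)
  rw [dotProduct_comm (pdx u p)] at h0
  linarith

lemma orthY (hu : ContDiff ℝ (⊤ : ℕ∞) u) (hs : ∀ p, u p ⬝ᵥ u p = 1) (p : ℝ × ℝ) :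
    u p ⬝ᵥ pdy u p = 0 := by
  have h := hasDerivAt_dot (pdy_hasDerivAt hu p) (pdy_hasDerivAt hu p)
  have heq : (fun t => u (p.1, t) ⬝ᵥ u (p.1, t)) = fun _ : ℝ => (1 : ℝ) :=
    funext fun t => hs (p.1, t)
  rw [heq] at h
  have h0 : pdy u p ⬝ᵥ u p + u p ⬝ᵥ pdy u p = 0 := h.unique (hasDerivAt_const _ _)
  rw [dotProduct_comm (pdy u p)] at h0
  linarith

end Calc

/-- If `u : ℝ² → S²` satisfies `u_x = u × u_y`, then `u` is harmonic: `Δu + |∇u|² u = 0`. -/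
theorem stmt4 (u : ℝ × ℝ → (Fin 3 → ℝ)) (hu : ContDiff ℝ (⊤ : ℕ∞) u)
    (hsphere : ∀ p, u p ⬝ᵥ u p = 1)
    (h1 : ∀ p, pdx u p = u p ×₃ pdy u p) :
    ∀ p, pdx (pdx u) p + pdy (pdy u) p
      + (pdx u p ⬝ᵥ pdx u p + pdy u p ⬝ᵥ pdy u p) • u p = 0 := by
  intro p
  have hux : ContDiff ℝ (⊤ : ℕ∞) (pdx u) := pdx_contDiff hu
  have huy : ContDiff ℝ (⊤ : ℕ∞) (pdy u) := pdy_contDiff hu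
  have oX := orthX hu hsphere
  have oY := orthY hu hsphere
  have hxfun : pdx u = fun q => u q ×₃ pdy u q := funext h1
  have hyneg : pdy u = fun q => -(u q ×₃ pdx u q) := by
    funext q
    have : u q ×₃ pdx u q = -(pdy u q) := by
      rw [h1 q, triple1, oY q, hsphere q]; simp
    rw [this, neg_neg]
  have e1 : pdx (pdx u) p = pdx u p ×₃ pdy u p + u p ×₃ pdx (pdy u) p := by
    conv_lhs => rw [hxfun]
    have h := hasDerivAt_cross (pdx_hasDerivAt hu p) (pdx_hasDerivAt huy p)
    simpa [pdx] using h.deriv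
  have e2 : pdy (pdy u) p = -(pdy u p ×₃ pdx u p + u p ×₃ pdy (pdx u) p) := by
    conv_lhs => rw [hyneg]
    have h := (hasDerivAt_cross (pdy_hasDerivAt hu p) (pdy_hasDerivAt hux p)).neg
    exact h.deriv
  have c1 : pdx u p ×₃ pdy u p = -((pdy u p ⬝ᵥ pdy u p) • u p) := by
    rw [h1 p, triple2, oY p]; simp
  have c2 : pdx u p ×₃ pdy u p = -((pdx u p ⬝ᵥ pdx u p) • u p) := by
    have hy : pdy u p = -(u p ×₃ pdx u p) := congrFun hyneg p
    have oX' : pdx u p ⬝ᵥ u p = 0 := by rw [dotProduct_comm]; exact oX p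
    rw [hy, map_neg, triple3, oX']
    simp [dotProduct_comm]
  have anti : pdy u p ×₃ pdx u p = -(pdx u p ×₃ pdy u p) :=
    (cross_anticomm _ _).symm
  rw [e1, e2, pd_comm hu p, anti]
  nth_rewrite 1 [c1]
  rw [c2]
  module
end

section
/- Let f : C → C be holomorphic and u = S ∘ f where S is the stereographic projection onto S^2. Then u satisfies the first-order equation u_x = u × u_y on C. -/
/-!
By the chain rule, and since `f` is complex differentiable, `u_x = dS (f')` and
`u_y = dS (I * f')` with `dS` the real differential of `S` at `f (x + y I)`. So the equation is the
pointwise identity `dS c = S w ⨯₃ dS (I * c)`: `S` is conformal, so `dS` turns multiplication by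
`I` into the quarter-turn `v ↦ v ⨯₃ S w` of the tangent plane of the sphere at `S w`.
-/

open Matrix

/-- Stereographic projection from the north pole, `S : ℂ → S² \ {N}`. -/
noncomputable def stereo (z : ℂ) : Fin 3 → ℝ :=
  ![2 * z.re / (1 + Complex.normSq z), 2 * z.im / (1 + Complex.normSq z),
    (Complex.normSq z - 1) / (Complex.normSq z + 1)]

open Complex

noncomputable def stereoDeriv (w c : ℂ) : Fin 3 → ℝ :=
  ![2 * (c.re * (1 + normSq w) - 2 * w.re * (w.re * c.re + w.im * c.im)) / (1 + normSq w) ^ 2,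
    2 * (c.im * (1 + normSq w) - 2 * w.im * (w.re * c.re + w.im * c.im)) / (1 + normSq w) ^ 2,
    4 * (w.re * c.re + w.im * c.im) / (1 + normSq w) ^ 2]

lemma one_add_normSq_pos (w : ℂ) : 0 < 1 + normSq w := by
  linarith [normSq_nonneg w]

lemma HasDerivAt.stereo {g : ℝ → ℂ} {c : ℂ} {t : ℝ} (hg : HasDerivAt g c t) :
    HasDerivAt (fun s => stereo (g s)) (stereoDeriv (g t) c) t := by
  have hre : HasDerivAt (fun s => (g s).re) c.re t := reCLM.hasFDerivAt.comp_hasDerivAt t hg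
  have him : HasDerivAt (fun s => (g s).im) c.im t := imCLM.hasFDerivAt.comp_hasDerivAt t hg
  have hn : HasDerivAt (fun s => normSq (g s)) (2 * ((g t).re * c.re + (g t).im * c.im)) t := by
    simp only [normSq_apply]
    exact ((hre.mul hre).add (him.mul him)).congr_deriv (by ring)
  have hpos := one_add_normSq_pos (g t)
  have hpos' : 0 < normSq (g t) + 1 := by rwa [add_comm]
  rw [hasDerivAt_pi]
  intro i
  fin_cases i <;> simp only [_root_.stereo, stereoDeriv, Fin.zero_eta, Fin.mk_one, Fin.reduceFinMk,
    Fin.isValue, cons_val_zero, cons_val_one, cons_val]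
  · exact ((hre.const_mul 2).div (hn.const_add 1) hpos.ne').congr_deriv (by field_simp)
  · exact ((him.const_mul 2).div (hn.const_add 1) hpos.ne').congr_deriv (by field_simp)
  · exact ((hn.sub_const 1).div (hn.add_const 1) hpos'.ne').congr_deriv (by field_simp; ring)

lemma stereoDeriv_eq_stereo_cross (w c : ℂ) :
    stereoDeriv w c = stereo w ⨯₃ stereoDeriv w (I * c) := by
  have hpos := one_add_normSq_pos w
  have hpos' : 0 < normSq w + 1 := by rwa [add_comm]
  rw [normSq_apply] at hpos hpos'
  ext i
  fin_cases i <;>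
  · simp only [stereoDeriv, _root_.stereo, cross_apply, normSq_apply, mul_re, mul_im, I_re, I_im,
      Fin.zero_eta, Fin.mk_one, Fin.reduceFinMk, Fin.isValue, cons_val_zero, cons_val_one, cons_val]
    field_simp
    ring

lemma HasDerivAt.comp_ofReal_add_const {f : ℂ → ℂ} {f' : ℂ} {x : ℝ} {a : ℂ}
    (hf : HasDerivAt f f' (x + a)) : HasDerivAt (fun s : ℝ => f (s + a)) f' x :=
  (hf.comp_add_const (x : ℂ) a).comp_ofReal

lemma HasDerivAt.comp_const_add_ofReal_mul_I {f : ℂ → ℂ} {f' : ℂ} {a : ℂ} {y : ℝ}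
    (hf : HasDerivAt f f' (a + y * I)) : HasDerivAt (fun s : ℝ => f (a + s * I)) (I * f') y := by
  have hline : HasDerivAt (fun s : ℂ => a + s * I) I y := by
    simpa using ((hasDerivAt_id (y : ℂ)).mul_const I).const_add a
  exact (hf.comp (y : ℂ) hline).comp_ofReal.congr_deriv (mul_comm _ _)

/-- If `f : ℂ → ℂ` is holomorphic and `u = S ∘ f`, then `u_x = u × u_y`. -/
theorem stmt8 (f : ℂ → ℂ) (hf : Differentiable ℂ f)
    (u : ℝ × ℝ → (Fin 3 → ℝ))
    (hu : ∀ p : ℝ × ℝ, u p = stereo (f (p.1 + p.2 * Complex.I))) :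
    ∀ p, pdx u p = u p ⨯₃ pdy u p := by
  rintro ⟨x, y⟩
  have hf' := (hf (x + y * I)).hasDerivAt
  have hx : pdx u (x, y) = stereoDeriv (f (x + y * I)) (deriv f (x + y * I)) := by
    simp only [pdx, hu]
    exact hf'.comp_ofReal_add_const.stereo.deriv
  have hy : pdy u (x, y) = stereoDeriv (f (x + y * I)) (I * deriv f (x + y * I)) := by
    simp only [pdy, hu]
    exact hf'.comp_const_add_ofReal_mul_I.stereo.deriv
  rw [hx, hy, hu, stereoDeriv_eq_stereo_cross]
end

section
/- Let u : R^2 → S^2 be a smooth map avoiding the north pole N = (0,0,1), and let f = S^{-1} ∘ u = (u_1 + i u_2)/(1 - u_3). Then u satisfies u_x = u × u_y if and only if f satisfies the Cauchy-Riemann equations (i.e., f is holomorphic as a function of z = x + iy). -/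
open Matrix

private lemma key_alg (a b c x1 x2 x3 y1 y2 y3 : ℝ) (hc : c < 1)
    (hS : a^2 + b^2 + c^2 = 1) (hOx : a*x1 + b*x2 + c*x3 = 0)
    (hOy : a*y1 + b*y2 + c*y3 = 0) :
    (x1 = b*y3 - c*y2 ∧ x2 = c*y1 - a*y3 ∧ x3 = a*y2 - b*y1) ↔
    ((x1*(1-c) - a*(-x3))/(1-c)^2 = (y2*(1-c) - b*(-y3))/(1-c)^2 ∧
     (y1*(1-c) - a*(-y3))/(1-c)^2 = -((x2*(1-c) - b*(-x3))/(1-c)^2)) := by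
  have h1c : (1:ℝ) - c ≠ 0 := by intro h; linarith
  have hpow : ((1:ℝ) - c)^2 ≠ 0 := pow_ne_zero 2 h1c
  constructor
  · rintro ⟨e1, e2, e3⟩
    have N1 : x1*(1-c) - a*(-x3) = y2*(1-c) - b*(-y3) := by
      linear_combination (1-c)*e1 + a*e3 + y2*hS - b*hOy
    have N2 : y1*(1-c) - a*(-y3) = -(x2*(1-c) - b*(-x3)) := by
      linear_combination (1-c)*e2 + b*e3 + a*hOy - y1*hS
    exact ⟨by rw [N1], by rw [N2, neg_div]⟩
  · rintro ⟨d1, d2⟩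
    have N1 : x1*(1-c) - a*(-x3) = y2*(1-c) - b*(-y3) :=
      mul_right_cancel₀ hpow (by
        have := d1
        rw [div_eq_div_iff hpow hpow] at this
        linarith)
    have N2 : y1*(1-c) - a*(-y3) = -(x2*(1-c) - b*(-x3)) := by
      rw [← neg_div] at d2
      have := d2
      rw [div_eq_div_iff hpow hpow] at this
      exact mul_right_cancel₀ hpow (by linarith)
    have hx3 : x3 = a*y2 - b*y1 := by
      have h0 : (1-c)*(x3 - (a*y2 - b*y1)) = 0 := by
        linear_combination a*N1 + b*N2 - (1-c)*hOx - x3*hS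
      have := (mul_eq_zero.mp h0).resolve_left h1c
      linarith
    have hx1 : x1 = b*y3 - c*y2 := by
      have h0 : (1-c)*(x1 - (b*y3 - c*y2)) = 0 := by
        linear_combination N1 - a*hx3 + b*hOy - y2*hS
      have := (mul_eq_zero.mp h0).resolve_left h1c
      linarith
    have hx2 : x2 = c*y1 - a*y3 := by
      have h0 : (1-c)*(x2 - (c*y1 - a*y3)) = 0 := by
        linear_combination N2 - b*hx3 - a*hOy + y1*hS
      have := (mul_eq_zero.mp h0).resolve_left h1c
      linarith
    exact ⟨hx1, hx2, hx3⟩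

/-- For a smooth map `u : ℝ² → S²` avoiding the north pole, with
`f = (u₁ + i u₂)/(1 - u₃)`, one has `u_x = u × u_y` iff `f` satisfies the
Cauchy–Riemann equations. -/
theorem stmt9 (u : ℝ × ℝ → (Fin 3 → ℝ)) (hu : ContDiff ℝ (⊤ : ℕ∞) u)
    (hsphere : ∀ p, u p ⬝ᵥ u p = 1) (hN : ∀ p, u p 2 < 1)
    (f : ℝ × ℝ → ℂ)
    (hf : ∀ p, f p = ((u p 0 : ℂ) + (u p 1 : ℂ) * Complex.I) / (1 - (u p 2 : ℂ))) :
    (∀ p, pdx u p = u p ⨯₃ pdy u p) ↔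
    (∀ p, pdx (fun q => (f q).re) p = pdy (fun q => (f q).im) p ∧
          pdy (fun q => (f q).re) p = -pdx (fun q => (f q).im) p) := by
  have hdiff : Differentiable ℝ u := hu.differentiable (by simp)
  -- re/im formulas
  have hre : (fun q => (f q).re) = fun q => u q 0 / (1 - u q 2) := by
    funext q
    have hpos : (0:ℝ) < 1 - u q 2 := by linarith [hN q]
    have hne : ((1 - u q 2 : ℝ) : ℂ) ≠ 0 := Complex.ofReal_ne_zero.mpr (ne_of_gt hpos)
    have hden : (1:ℂ) - (u q 2 : ℂ) = ((1 - u q 2 : ℝ) : ℂ) := by push_cast; ring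
    have hval : f q = ((u q 0 / (1 - u q 2) : ℝ) : ℂ) +
        ((u q 1 / (1 - u q 2) : ℝ) : ℂ) * Complex.I := by
      rw [hf q, hden]
      rw [Complex.ofReal_div, Complex.ofReal_div]
      field_simp
    rw [hval]
    simp only [Complex.add_re, Complex.mul_re, Complex.ofReal_re, Complex.ofReal_im,
      Complex.I_re, Complex.I_im]
    ring
  have him : (fun q => (f q).im) = fun q => u q 1 / (1 - u q 2) := by
    funext q
    have hpos : (0:ℝ) < 1 - u q 2 := by linarith [hN q]
    have hne : ((1 - u q 2 : ℝ) : ℂ) ≠ 0 := Complex.ofReal_ne_zero.mpr (ne_of_gt hpos)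
    have hden : (1:ℂ) - (u q 2 : ℂ) = ((1 - u q 2 : ℝ) : ℂ) := by push_cast; ring
    have hval : f q = ((u q 0 / (1 - u q 2) : ℝ) : ℂ) +
        ((u q 1 / (1 - u q 2) : ℝ) : ℂ) * Complex.I := by
      rw [hf q, hden]
      rw [Complex.ofReal_div, Complex.ofReal_div]
      field_simp
    rw [hval]
    simp only [Complex.add_im, Complex.mul_im, Complex.ofReal_re, Complex.ofReal_im,
      Complex.I_re, Complex.I_im]
    ring
  -- pointwise key iff
  have key : ∀ p : ℝ × ℝ, (pdx u p = u p ⨯₃ pdy u p) ↔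
      (pdx (fun q => (f q).re) p = pdy (fun q => (f q).im) p ∧
       pdy (fun q => (f q).re) p = -pdx (fun q => (f q).im) p) := by
    rintro ⟨x₀, y₀⟩
    -- derivatives along slices
    have hlx : HasDerivAt (fun t : ℝ => (t, y₀)) ((1:ℝ), (0:ℝ)) x₀ :=
      (hasDerivAt_id x₀).prodMk (hasDerivAt_const x₀ y₀)
    have hly : HasDerivAt (fun t : ℝ => (x₀, t)) ((0:ℝ), (1:ℝ)) y₀ :=
      (hasDerivAt_const y₀ x₀).prodMk (hasDerivAt_id y₀)
    have h1 := (hdiff (x₀, y₀)).hasFDerivAt.comp_hasDerivAt x₀ hlx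
    have h2 := (hdiff (x₀, y₀)).hasFDerivAt.comp_hasDerivAt y₀ hly
    have hux : HasDerivAt (fun t => u (t, y₀)) (pdx u (x₀, y₀)) x₀ := by
      simpa [pdx] using h1.differentiableAt.hasDerivAt
    have huy : HasDerivAt (fun t => u (x₀, t)) (pdy u (x₀, y₀)) y₀ := by
      simpa [pdy] using h2.differentiableAt.hasDerivAt
    have huxi : ∀ i, HasDerivAt (fun t => u (t, y₀) i) (pdx u (x₀, y₀) i) x₀ := by
      intro i
      exact (ContinuousLinearMap.proj (R := ℝ) (φ := fun _ : Fin 3 => ℝ)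
        i).hasFDerivAt.comp_hasDerivAt x₀ hux
    have huyi : ∀ i, HasDerivAt (fun t => u (x₀, t) i) (pdy u (x₀, y₀) i) y₀ := by
      intro i
      exact (ContinuousLinearMap.proj (R := ℝ) (φ := fun _ : Fin 3 => ℝ)
        i).hasFDerivAt.comp_hasDerivAt y₀ huy
    set a := u (x₀, y₀) 0 with ha
    set b := u (x₀, y₀) 1 with hb
    set c := u (x₀, y₀) 2 with hcdef
    set X1 := pdx u (x₀, y₀) 0
    set X2 := pdx u (x₀, y₀) 1
    set X3 := pdx u (x₀, y₀) 2
    set Y1 := pdy u (x₀, y₀) 0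
    set Y2 := pdy u (x₀, y₀) 1
    set Y3 := pdy u (x₀, y₀) 2
    have hc : c < 1 := hN (x₀, y₀)
    have hnex : ∀ t : ℝ, (1:ℝ) - u (t, y₀) 2 ≠ 0 := fun t => by
      have := hN (t, y₀); intro h; linarith
    have hney : ∀ t : ℝ, (1:ℝ) - u (x₀, t) 2 ≠ 0 := fun t => by
      have := hN (x₀, t); intro h; linarith
    -- sphere constraint
    have hS : a^2 + b^2 + c^2 = 1 := by
      have := hsphere (x₀, y₀)
      simp only [dotProduct, Fin.sum_univ_three] at this
      nlinarith [this]
    -- orthogonality in x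
    have hOx : a*X1 + b*X2 + c*X3 = 0 := by
      have hg : (fun t => u (t, y₀) 0 * u (t, y₀) 0 + u (t, y₀) 1 * u (t, y₀) 1 +
          u (t, y₀) 2 * u (t, y₀) 2) = fun _ => (1:ℝ) := by
        funext t
        have := hsphere (t, y₀)
        simpa [dotProduct, Fin.sum_univ_three] using this
      have hD : HasDerivAt (fun t => u (t, y₀) 0 * u (t, y₀) 0 + u (t, y₀) 1 * u (t, y₀) 1 +
          u (t, y₀) 2 * u (t, y₀) 2)
          (X1 * a + a * X1 + (X2 * b + b * X2) + (X3 * c + c * X3)) x₀ :=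
        (((huxi 0).mul (huxi 0)).add ((huxi 1).mul (huxi 1))).add ((huxi 2).mul (huxi 2))
      rw [hg] at hD
      have h0 := hD.unique (hasDerivAt_const x₀ 1)
      linarith
    have hOy : a*Y1 + b*Y2 + c*Y3 = 0 := by
      have hg : (fun t => u (x₀, t) 0 * u (x₀, t) 0 + u (x₀, t) 1 * u (x₀, t) 1 +
          u (x₀, t) 2 * u (x₀, t) 2) = fun _ => (1:ℝ) := by
        funext t
        have := hsphere (x₀, t)
        simpa [dotProduct, Fin.sum_univ_three] using this
      have hD : HasDerivAt (fun t => u (x₀, t) 0 * u (x₀, t) 0 + u (x₀, t) 1 * u (x₀, t) 1 +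
          u (x₀, t) 2 * u (x₀, t) 2)
          (Y1 * a + a * Y1 + (Y2 * b + b * Y2) + (Y3 * c + c * Y3)) y₀ :=
        (((huyi 0).mul (huyi 0)).add ((huyi 1).mul (huyi 1))).add ((huyi 2).mul (huyi 2))
      rw [hg] at hD
      have h0 := hD.unique (hasDerivAt_const y₀ 1)
      linarith
    -- derivatives of re/im of f
    have hfx_re : pdx (fun q => (f q).re) (x₀, y₀) = (X1*(1-c) - a*(-X3))/(1-c)^2 := by
      rw [hre]
      have hA : HasDerivAt (fun t => u (t, y₀) 0 / (1 - u (t, y₀) 2))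
          ((X1 * (1 - c) - a * (0 - X3)) / (1 - c)^2) x₀ :=
        (huxi 0).div ((hasDerivAt_const x₀ (1:ℝ)).sub (huxi 2)) (hnex x₀)
      have := hA.deriv
      simp only [pdx]
      rw [this]; ring_nf
    have hfx_im : pdx (fun q => (f q).im) (x₀, y₀) = (X2*(1-c) - b*(-X3))/(1-c)^2 := by
      rw [him]
      have hA : HasDerivAt (fun t => u (t, y₀) 1 / (1 - u (t, y₀) 2))
          ((X2 * (1 - c) - b * (0 - X3)) / (1 - c)^2) x₀ :=
        (huxi 1).div ((hasDerivAt_const x₀ (1:ℝ)).sub (huxi 2)) (hnex x₀)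
      have := hA.deriv
      simp only [pdx]
      rw [this]; ring_nf
    have hfy_re : pdy (fun q => (f q).re) (x₀, y₀) = (Y1*(1-c) - a*(-Y3))/(1-c)^2 := by
      rw [hre]
      have hA : HasDerivAt (fun t => u (x₀, t) 0 / (1 - u (x₀, t) 2))
          ((Y1 * (1 - c) - a * (0 - Y3)) / (1 - c)^2) y₀ :=
        (huyi 0).div ((hasDerivAt_const y₀ (1:ℝ)).sub (huyi 2)) (hney y₀)
      have := hA.deriv
      simp only [pdy]
      rw [this]; ring_nf
    have hfy_im : pdy (fun q => (f q).im) (x₀, y₀) = (Y2*(1-c) - b*(-Y3))/(1-c)^2 := by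
      rw [him]
      have hA : HasDerivAt (fun t => u (x₀, t) 1 / (1 - u (x₀, t) 2))
          ((Y2 * (1 - c) - b * (0 - Y3)) / (1 - c)^2) y₀ :=
        (huyi 1).div ((hasDerivAt_const y₀ (1:ℝ)).sub (huyi 2)) (hney y₀)
      have := hA.deriv
      simp only [pdy]
      rw [this]; ring_nf
    -- componentwise form of the cross product equation
    have hcross : (pdx u (x₀, y₀) = u (x₀, y₀) ⨯₃ pdy u (x₀, y₀)) ↔
        (X1 = b*Y3 - c*Y2 ∧ X2 = c*Y1 - a*Y3 ∧ X3 = a*Y2 - b*Y1) := by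
      rw [cross_apply]
      constructor
      · intro h
        refine ⟨?_, ?_, ?_⟩
        · simpa using congrFun h 0
        · simpa using congrFun h 1
        · simpa using congrFun h 2
      · rintro ⟨e1, e2, e3⟩
        funext i
        fin_cases i
        · simpa using e1
        · simpa using e2
        · simpa using e3
    rw [hcross, hfx_re, hfx_im, hfy_re, hfy_im]
    exact key_alg a b c X1 X2 X3 Y1 Y2 Y3 hc hS hOx hOy
  exact ⟨fun h p => (key p).mp (h p), fun h p => (key p).mpr (h p)⟩
end

section
/- Let u : R^2 → S^2 satisfy u_x = u × u_y, u_y = -u × u_x, and let v : R^2 → R^3 satisfy both v_x = v × u_y + u × v_y and v_y = -(v × u_x + u × v_x). Then v satisfies the second-order linearized harmonic map equation Δv + |∇u|^2 v + 2(∇u · ∇v) u = 0. -/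
open Matrix

section Aux

variable {E : Type*} [NormedAddCommGroup E] [NormedSpace ℝ E]

lemma pdx_fderiv (f : ℝ × ℝ → E) (p : ℝ × ℝ) (hf : DifferentiableAt ℝ f p) :
    pdx f p = fderiv ℝ f p (1, 0) := by
  have h1 : HasFDerivAt (fun t : ℝ => (t, p.2))
      ((ContinuousLinearMap.id ℝ ℝ).prod 0) p.1 :=
    (hasFDerivAt_id _).prodMk (hasFDerivAt_const _ _)
  have h2 : HasDerivAt (fun t => f (t, p.2)) (fderiv ℝ f p (1, 0)) p.1 := by
    simpa [Function.comp_def] using (hf.hasFDerivAt.comp p.1 h1).hasDerivAt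
  rw [pdx, h2.deriv]

lemma pdy_fderiv (f : ℝ × ℝ → E) (p : ℝ × ℝ) (hf : DifferentiableAt ℝ f p) :
    pdy f p = fderiv ℝ f p (0, 1) := by
  have h1 : HasFDerivAt (fun t : ℝ => (p.1, t))
      ((0 : ℝ →L[ℝ] ℝ).prod (ContinuousLinearMap.id ℝ ℝ)) p.2 :=
    (hasFDerivAt_const _ _).prodMk (hasFDerivAt_id _)
  have h2 : HasDerivAt (fun t => f (p.1, t)) (fderiv ℝ f p (0, 1)) p.2 := by
    simpa [Function.comp_def] using (hf.hasFDerivAt.comp p.2 h1).hasDerivAt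
  rw [pdy, h2.deriv]

lemma pdx_eq_fderiv_apply (f : ℝ × ℝ → E) (hf : ContDiff ℝ (⊤ : ℕ∞) f) :
    pdx f = fun p => fderiv ℝ f p (1, 0) :=
  funext fun p => pdx_fderiv f p (hf.differentiable (by simp) p)

lemma pdy_eq_fderiv_apply (f : ℝ × ℝ → E) (hf : ContDiff ℝ (⊤ : ℕ∞) f) :
    pdy f = fun p => fderiv ℝ f p (0, 1) :=
  funext fun p => pdy_fderiv f p (hf.differentiable (by simp) p)

lemma contDiff_pdx (f : ℝ × ℝ → E) (hf : ContDiff ℝ (⊤ : ℕ∞) f) : ContDiff ℝ (⊤ : ℕ∞) (pdx f) := by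
  rw [pdx_eq_fderiv_apply f hf]
  exact (hf.fderiv_right (by simp)).clm_apply contDiff_const

lemma contDiff_pdy (f : ℝ × ℝ → E) (hf : ContDiff ℝ (⊤ : ℕ∞) f) : ContDiff ℝ (⊤ : ℕ∞) (pdy f) := by
  rw [pdy_eq_fderiv_apply f hf]
  exact (hf.fderiv_right (by simp)).clm_apply contDiff_const

/-- Clairaut: mixed partials commute for smooth functions. -/
lemma pdx_pdy_comm (f : ℝ × ℝ → E) (hf : ContDiff ℝ (⊤ : ℕ∞) f) (p : ℝ × ℝ) :
    pdx (pdy f) p = pdy (pdx f) p := by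
  have hdf : Differentiable ℝ f := hf.differentiable (by simp)
  have hfd : ContDiff ℝ (⊤ : ℕ∞) (fderiv ℝ f) := hf.fderiv_right (by simp)
  have hfd' : Differentiable ℝ (fderiv ℝ f) := hfd.differentiable (by simp)
  have hsymm : ∀ w z : ℝ × ℝ,
      fderiv ℝ (fderiv ℝ f) p w z = fderiv ℝ (fderiv ℝ f) p z w := fun w z =>
    second_derivative_symmetric (fun y => (hdf y).hasFDerivAt) (hfd' p).hasFDerivAt w z
  have e1 : ∀ w : ℝ × ℝ, DifferentiableAt ℝ (fun q => fderiv ℝ f q w) p :=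
    fun w => (hfd' p).clm_apply (differentiableAt_const w)
  have key : ∀ w z : ℝ × ℝ,
      fderiv ℝ (fun q => fderiv ℝ f q w) p z = fderiv ℝ (fderiv ℝ f) p z w := by
    intro w z
    rw [fderiv_clm_apply (hfd' p) (differentiableAt_const w)]
    simp
  have d1 : DifferentiableAt ℝ (pdy f) p := by
    rw [pdy_eq_fderiv_apply f hf]; exact e1 (0, 1)
  have d2 : DifferentiableAt ℝ (pdx f) p := by
    rw [pdx_eq_fderiv_apply f hf]; exact e1 (1, 0)
  rw [pdx_fderiv _ p d1, pdy_fderiv _ p d2,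
    pdy_eq_fderiv_apply f hf, pdx_eq_fderiv_apply f hf, key, key, hsymm]

end Aux

section Cross

noncomputable def crossL : (Fin 3 → ℝ) →L[ℝ] (Fin 3 → ℝ) →L[ℝ] (Fin 3 → ℝ) :=
  LinearMap.toContinuousLinearMap
    ((LinearMap.toContinuousLinearMap.toLinearMap).comp
      (crossProduct : (Fin 3 → ℝ) →ₗ[ℝ] (Fin 3 → ℝ) →ₗ[ℝ] (Fin 3 → ℝ)))

@[simp] lemma crossL_apply (a b : Fin 3 → ℝ) : crossL a b = a ⨯₃ b := rfl

lemma contDiff_cross {f g : ℝ × ℝ → (Fin 3 → ℝ)} (hf : ContDiff ℝ (⊤ : ℕ∞) f)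
    (hg : ContDiff ℝ (⊤ : ℕ∞) g) : ContDiff ℝ (⊤ : ℕ∞) (fun q => f q ⨯₃ g q) :=
  (crossL.isBoundedBilinearMap.contDiff).comp (hf.prodMk hg)

lemma fderiv_cross {f g : ℝ × ℝ → (Fin 3 → ℝ)} {p : ℝ × ℝ}
    (hf : DifferentiableAt ℝ f p) (hg : DifferentiableAt ℝ g p) (w : ℝ × ℝ) :
    fderiv ℝ (fun q => f q ⨯₃ g q) p w
      = fderiv ℝ f p w ⨯₃ g p + f p ⨯₃ fderiv ℝ g p w := by
  have hB := crossL.isBoundedBilinearMap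
  have h := (hB.hasFDerivAt (f p, g p)).comp p (hf.hasFDerivAt.prodMk hg.hasFDerivAt)
  have h2 : fderiv ℝ (fun q => f q ⨯₃ g q) p
      = (hB.deriv (f p, g p)).comp ((fderiv ℝ f p).prod (fderiv ℝ g p)) := h.fderiv
  rw [h2]
  simp [hB.deriv_apply, add_comm]

lemma pdx_cross {f g : ℝ × ℝ → (Fin 3 → ℝ)} (hf : ContDiff ℝ (⊤ : ℕ∞) f)
    (hg : ContDiff ℝ (⊤ : ℕ∞) g) (p : ℝ × ℝ) :
    pdx (fun q => f q ⨯₃ g q) p = pdx f p ⨯₃ g p + f p ⨯₃ pdx g p := by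
  rw [pdx_fderiv _ p ((contDiff_cross hf hg).differentiable (by simp) p),
    fderiv_cross (hf.differentiable (by simp) p) (hg.differentiable (by simp) p),
    pdx_fderiv f p (hf.differentiable (by simp) p),
    pdx_fderiv g p (hg.differentiable (by simp) p)]

lemma pdy_cross {f g : ℝ × ℝ → (Fin 3 → ℝ)} (hf : ContDiff ℝ (⊤ : ℕ∞) f)
    (hg : ContDiff ℝ (⊤ : ℕ∞) g) (p : ℝ × ℝ) :
    pdy (fun q => f q ⨯₃ g q) p = pdy f p ⨯₃ g p + f p ⨯₃ pdy g p := by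
  rw [pdy_fderiv _ p ((contDiff_cross hf hg).differentiable (by simp) p),
    fderiv_cross (hf.differentiable (by simp) p) (hg.differentiable (by simp) p),
    pdy_fderiv f p (hf.differentiable (by simp) p),
    pdy_fderiv g p (hg.differentiable (by simp) p)]

lemma pdx_add {E : Type*} [NormedAddCommGroup E] [NormedSpace ℝ E]
    {f g : ℝ × ℝ → E} (hf : ContDiff ℝ (⊤ : ℕ∞) f) (hg : ContDiff ℝ (⊤ : ℕ∞) g) (p : ℝ × ℝ) :
    pdx (fun q => f q + g q) p = pdx f p + pdx g p := by
  rw [pdx_fderiv (fun q => f q + g q) p ((hf.differentiable (by simp) p).add (hg.differentiable (by simp) p)),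
    fderiv_fun_add (hf.differentiable (by simp) p) (hg.differentiable (by simp) p),
    pdx_fderiv f p (hf.differentiable (by simp) p),
    pdx_fderiv g p (hg.differentiable (by simp) p)]
  rfl

lemma pdy_add {E : Type*} [NormedAddCommGroup E] [NormedSpace ℝ E]
    {f g : ℝ × ℝ → E} (hf : ContDiff ℝ (⊤ : ℕ∞) f) (hg : ContDiff ℝ (⊤ : ℕ∞) g) (p : ℝ × ℝ) :
    pdy (fun q => f q + g q) p = pdy f p + pdy g p := by
  rw [pdy_fderiv (fun q => f q + g q) p ((hf.differentiable (by simp) p).add (hg.differentiable (by simp) p)),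
    fderiv_fun_add (hf.differentiable (by simp) p) (hg.differentiable (by simp) p),
    pdy_fderiv f p (hf.differentiable (by simp) p),
    pdy_fderiv g p (hg.differentiable (by simp) p)]
  rfl

lemma pdy_neg {E : Type*} [NormedAddCommGroup E] [NormedSpace ℝ E]
    {f : ℝ × ℝ → E} (hf : ContDiff ℝ (⊤ : ℕ∞) f) (p : ℝ × ℝ) :
    pdy (fun q => -(f q)) p = -(pdy f p) := by
  rw [pdy_fderiv (fun q => -(f q)) p (hf.differentiable (by simp) p).neg, fderiv_fun_neg,
    pdy_fderiv f p (hf.differentiable (by simp) p)]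
  rfl

end Cross

section Alg

lemma bac_cab (u v w : Fin 3 → ℝ) :
    u ⨯₃ (v ⨯₃ w) = (u ⬝ᵥ w) • v - (u ⬝ᵥ v) • w := by
  ext i
  fin_cases i <;>
    simp [cross_apply, dotProduct, Fin.sum_univ_three, Pi.smul_apply, smul_eq_mul] <;> ring

lemma abc_cross (u v w : Fin 3 → ℝ) :
    (u ⨯₃ v) ⨯₃ w = (w ⬝ᵥ u) • v - (w ⬝ᵥ v) • u := by
  ext i
  fin_cases i <;>
    simp [cross_apply, dotProduct, Fin.sum_univ_three, Pi.smul_apply, smul_eq_mul] <;> ring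

lemma alg_key (a b ax ay bx b_y M N : Fin 3 → ℝ)
    (h1 : a ⬝ᵥ a = 1) (h2 : a ⬝ᵥ b = 0)
    (h3 : ax = a ⨯₃ ay) (h4 : ay = -(a ⨯₃ ax))
    (h5 : bx = b ⨯₃ ay + a ⨯₃ b_y) (h6 : b_y = -(b ⨯₃ ax + a ⨯₃ bx)) :
    ((bx ⨯₃ ay + b ⨯₃ M) + (ax ⨯₃ b_y + a ⨯₃ N))
      + -((b_y ⨯₃ ax + b ⨯₃ M) + (ay ⨯₃ bx + a ⨯₃ N))
      + (ax ⬝ᵥ ax + ay ⬝ᵥ ay) • b + (2 * (ax ⬝ᵥ bx + ay ⬝ᵥ b_y)) • a = 0 := by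
  have hax : a ⬝ᵥ ax = 0 := by rw [h3]; exact dot_self_cross _ _
  have hay : a ⬝ᵥ ay = 0 := by rw [h4]; simp [dot_self_cross]
  have haxc : ax ⬝ᵥ a = 0 := by rw [dotProduct_comm]; exact hax
  have hayc : ay ⬝ᵥ a = 0 := by rw [dotProduct_comm]; exact hay
  have hnorm : ax ⬝ᵥ ax = ay ⬝ᵥ ay := by
    rw [h3, cross_dot_cross, h1, hay]; ring
  have hd4 : b ⨯₃ ay = (a ⬝ᵥ bx) • a := by
    have h := h5
    rw [h6, map_neg, map_add, bac_cab a b ax, bac_cab a a bx, hax, h2, h1] at h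
    linear_combination (norm := module) -h
  have hd5 : b ⬝ᵥ ax = -(a ⬝ᵥ bx) := by
    rw [h3, triple_product_permutation, ← cross_anticomm, hd4]
    simp [dotProduct_smul, h1]
  have t1 : bx ⨯₃ ay = (a ⬝ᵥ bx) • ax - (ay ⬝ᵥ b_y) • a := by
    conv_lhs => rw [h5, map_add, LinearMap.add_apply, hd4]
    rw [abc_cross a b_y ay]
    simp only [_root_.map_smul, LinearMap.smul_apply, hayc, zero_smul, zero_sub, ← h3]
    module
  have t2 : ax ⨯₃ b_y = -((ax ⬝ᵥ ax) • b) + (b ⬝ᵥ ax) • ax - (ax ⬝ᵥ bx) • a := by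
    conv_lhs => rw [h6]
    rw [map_neg, map_add, bac_cab ax b ax, bac_cab ax a bx, haxc, dotProduct_comm ax b]
    module
  have t3 : b_y ⨯₃ ax = -(ax ⨯₃ b_y) := by rw [cross_anticomm]
  have t4 : ay ⨯₃ bx = -(bx ⨯₃ ay) := by rw [cross_anticomm]
  rw [t3, t4, t1, t2, hd5, hnorm]
  module

end Alg

/-- If `u` solves the first-order harmonic map system and `v` solves the first-order
linearized system, then `v` solves the second-order linearized equation
`Δv + |∇u|² v + 2(∇u · ∇v) u = 0`. -/
theorem stmt13 (u v : ℝ × ℝ → (Fin 3 → ℝ)) (hu : ContDiff ℝ (⊤ : ℕ∞) u) (hv : ContDiff ℝ (⊤ : ℕ∞) v)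
    (hsphere : ∀ p, u p ⬝ᵥ u p = 1)
    (h1 : ∀ p, pdx u p = u p ⨯₃ pdy u p)
    (h2 : ∀ p, pdy u p = -(u p ⨯₃ pdx u p))
    (htan : ∀ p, u p ⬝ᵥ v p = 0)
    (hv1 : ∀ p, pdx v p = v p ⨯₃ pdy u p + u p ⨯₃ pdy v p)
    (hv2 : ∀ p, pdy v p = -(v p ⨯₃ pdx u p + u p ⨯₃ pdx v p)) :
    ∀ p, pdx (pdx v) p + pdy (pdy v) p
      + (pdx u p ⬝ᵥ pdx u p + pdy u p ⬝ᵥ pdy u p) • v p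
      + (2 * (pdx u p ⬝ᵥ pdx v p + pdy u p ⬝ᵥ pdy v p)) • u p = 0 := by
  intro p
  have hpxu := contDiff_pdx u hu
  have hpyu := contDiff_pdy u hu
  have hpxv := contDiff_pdx v hv
  have hpyv := contDiff_pdy v hv
  have E1 : pdx (pdx v) p
      = (pdx v p ⨯₃ pdy u p + v p ⨯₃ pdx (pdy u) p)
        + (pdx u p ⨯₃ pdy v p + u p ⨯₃ pdx (pdy v) p) := by
    have hrw : pdx v = fun q => (fun q => v q ⨯₃ pdy u q) q + (fun q => u q ⨯₃ pdy v q) q :=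
      funext hv1
    conv_lhs => rw [hrw]
    rw [pdx_add (contDiff_cross hv hpyu) (contDiff_cross hu hpyv),
      pdx_cross hv hpyu, pdx_cross hu hpyv]
  have E2 : pdy (pdy v) p
      = -((pdy v p ⨯₃ pdx u p + v p ⨯₃ pdy (pdx u) p)
        + (pdy u p ⨯₃ pdx v p + u p ⨯₃ pdy (pdx v) p)) := by
    have hrw : pdy v = fun q =>
        -((fun q => (fun q => v q ⨯₃ pdx u q) q + (fun q => u q ⨯₃ pdx v q) q) q) :=
      funext hv2
    conv_lhs => rw [hrw]
    rw [pdy_neg ((contDiff_cross hv hpxu).add (contDiff_cross hu hpxv)),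
      pdy_add (contDiff_cross hv hpxu) (contDiff_cross hu hpxv),
      pdy_cross hv hpxu, pdy_cross hu hpxv]
  rw [E1, E2, ← pdx_pdy_comm u hu p, ← pdx_pdy_comm v hv p]
  exact alg_key (u p) (v p) (pdx u p) (pdy u p) (pdx v p) (pdy v p)
    (pdx (pdy u) p) (pdx (pdy v) p)
    (hsphere p) (htan p) (h1 p) (h2 p) (hv1 p) (hv2 p)
end
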